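/- Let Ω be a nonempty finite type and let E = ⟨𝓔, mod⟩ be an epistemic space over Ω. Then AGM revision is realizable in E if and only if there exists a linear revision operator for E. -/

import Mathlib

open Set

/-- `minSet r S` is the set of `r`-minimal elements of `S`:
`min(S, r) = {ω ∈ S : r ω ω' for all ω' ∈ S}`. -/
def minSet {Ω : Type*} (r : Ω → Ω → Prop) (S : Set Ω) : Set Ω :=
  {ω ∈ S | ∀ ω' ∈ S, r ω ω'}

/-- A linear order as a relation: total, antisymmetric and transitive. -/
def IsLinRel {Ω : Type*} (r : Ω → Ω → Prop) : Prop :=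
  (∀ a b, r a b ∨ r b a) ∧ (∀ a b, r a b → r b a → a = b) ∧
    (∀ a b c, r a b → r b c → r a c)

/-- AGM contraction operator for the epistemic space `⟨E, md⟩` (postulates C1–C7,
formulated on model sets). -/
def IsContraction {Ω E : Type*} (md : E → Set Ω) (c : E → Set Ω → E) : Prop :=
  ∀ (Ψ : E) (A B : Set Ω),
    md Ψ ⊆ md (c Ψ A) ∧
    (¬ md Ψ ⊆ A → md (c Ψ A) ⊆ md Ψ) ∧
    (A ≠ Set.univ → ¬ md (c Ψ A) ⊆ A) ∧
    md (c Ψ A) ∩ A ⊆ md Ψ ∧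
    md (c Ψ (A ∩ B)) ⊆ md (c Ψ A) ∪ md (c Ψ B) ∧
    (¬ md (c Ψ (A ∩ B)) ⊆ B → md (c Ψ B) ⊆ md (c Ψ (A ∩ B)))

/-- AGM revision operator for the epistemic space `⟨E, md⟩` (postulates R1–R6,
formulated on model sets). -/
def IsRevision {Ω E : Type*} (md : E → Set Ω) (s : E → Set Ω → E) : Prop :=
  ∀ (Ψ : E) (A B : Set Ω),
    md (s Ψ A) ⊆ A ∧
    (md Ψ ∩ A ≠ ∅ → md (s Ψ A) = md Ψ ∩ A) ∧
    (A ≠ ∅ → md (s Ψ A) ≠ ∅) ∧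
    md (s Ψ A) ∩ B ⊆ md (s Ψ (A ∩ B)) ∧
    (md (s Ψ A) ∩ B ≠ ∅ → md (s Ψ (A ∩ B)) ⊆ md (s Ψ A) ∩ B)

/-- Postulate (ZC). -/
def ZC {Ω E : Type*} (md : E → Set Ω) : Prop :=
  ∀ (Ψ : E) (M : Set Ω), md Ψ ⊆ M → ∃ Ψ' : E, md Ψ' = M

/-- Postulate (ZR1). -/
def ZR1 {Ω E : Type*} (md : E → Set Ω) : Prop :=
  ∀ ω : Ω, ∃ Ψ : E, md Ψ = {ω}

/-- Postulate (ZR2). -/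
def ZR2 {Ω E : Type*} (md : E → Set Ω) : Prop :=
  ∀ (Ψ : E) (M : Set Ω), M ⊆ md Ψ → ∃ Ψ' : E, md Ψ' = M

/-- Postulate (Unbiased). -/
def Unbiased {Ω E : Type*} (md : E → Set Ω) : Prop :=
  ∀ M : Set Ω, ∃ Ψ : E, md Ψ = M

/-- Maxichoice contraction operator. -/
def IsMaxichoiceContraction {Ω E : Type*} (md : E → Set Ω) (c : E → Set Ω → E) : Prop :=
  IsContraction md c ∧
    ∀ Ψ : E, ∃ r : Ω → Ω → Prop, IsLinRel r ∧ ∀ A : Set Ω,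
      (¬ md Ψ ⊆ A → md (c Ψ A) = md Ψ) ∧
      (md Ψ ⊆ A → md (c Ψ A) = md Ψ ∪ minSet r Aᶜ)

/-- Linear contraction operator: a maxichoice contraction operator based on one
single linear order for all epistemic states. -/
def IsLinearContraction {Ω E : Type*} (md : E → Set Ω) (c : E → Set Ω → E) : Prop :=
  IsContraction md c ∧
    ∃ r : Ω → Ω → Prop, IsLinRel r ∧ ∀ (Ψ : E) (A : Set Ω),
      (¬ md Ψ ⊆ A → md (c Ψ A) = md Ψ) ∧
      (md Ψ ⊆ A → md (c Ψ A) = md Ψ ∪ minSet r Aᶜ)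

/-- Full meet contraction operator. -/
def IsFullMeetContraction {Ω E : Type*} (md : E → Set Ω) (c : E → Set Ω → E) : Prop :=
  IsContraction md c ∧
    ∀ (Ψ : E) (A : Set Ω),
      (¬ md Ψ ⊆ A → md (c Ψ A) = md Ψ) ∧
      (md Ψ ⊆ A → md (c Ψ A) = md Ψ ∪ Aᶜ)

/-- Maxichoice revision operator. -/
def IsMaxichoiceRevision {Ω E : Type*} (md : E → Set Ω) (s : E → Set Ω → E) : Prop :=
  IsRevision md s ∧
    ∀ Ψ : E, ∃ r : Ω → Ω → Prop, IsLinRel r ∧ ∀ A : Set Ω,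
      (md Ψ ∩ A ≠ ∅ → md (s Ψ A) = md Ψ ∩ A) ∧
      (md Ψ ∩ A = ∅ → md (s Ψ A) = minSet r A)

/-- Linear revision operator: a maxichoice revision operator based on one single
linear order for all epistemic states. -/
def IsLinearRevision {Ω E : Type*} (md : E → Set Ω) (s : E → Set Ω → E) : Prop :=
  IsRevision md s ∧
    ∃ r : Ω → Ω → Prop, IsLinRel r ∧ ∀ (Ψ : E) (A : Set Ω),
      (md Ψ ∩ A ≠ ∅ → md (s Ψ A) = md Ψ ∩ A) ∧
      (md Ψ ∩ A = ∅ → md (s Ψ A) = minSet r A)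

/-- Full meet revision operator. -/
def IsFullMeetRevision {Ω E : Type*} (md : E → Set Ω) (s : E → Set Ω → E) : Prop :=
  IsRevision md s ∧
    ∀ (Ψ : E) (A : Set Ω),
      (md Ψ ∩ A ≠ ∅ → md (s Ψ A) = md Ψ ∩ A) ∧
      (md Ψ ∩ A = ∅ → md (s Ψ A) = A)

/-!
Well-order `Ω` by some `≪`; then `min(A, ≪)` has exactly one element whenever `A ≠ ∅`. Revising
by a set `S` with at most one element is forced by (R1) and (R3): `mod(Ψ ★ S) = S`. Hence any AGM
revision operator `★` yields the operator `Ψ ∘ A := Ψ ★ min(A, ≪)` if `mod(Ψ) ∩ A = ∅` and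
`Ψ ∘ A := Ψ ★ A` otherwise, whose results have exactly the model sets required of a linear revision
operator for `≪`; that these model sets satisfy (R1)–(R6) comes down to elementary properties of
`min(·, ≪)`.
-/

section minSet

variable {Ω : Type*} {r : Ω → Ω → Prop}

theorem minSet_subset (S : Set Ω) : minSet r S ⊆ S := fun _ hω => hω.1

theorem minSet_inter_subset (A B : Set Ω) : minSet r A ∩ B ⊆ minSet r (A ∩ B) :=
  fun _ ⟨⟨hA, hmin⟩, hB⟩ => ⟨⟨hA, hB⟩, fun ω' hω' => hmin ω' hω'.1⟩

theorem minSet_inter_subset_of_nonempty (htrans : ∀ a b c, r a b → r b c → r a c) {A B : Set Ω}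
    (h : (minSet r A ∩ B).Nonempty) : minSet r (A ∩ B) ⊆ minSet r A ∩ B := by
  obtain ⟨ω, ⟨hωA, hωmin⟩, hωB⟩ := h
  rintro ω' ⟨⟨hω'A, hω'B⟩, hω'min⟩
  exact ⟨⟨hω'A, fun a ha => htrans _ _ _ (hω'min ω ⟨hωA, hωB⟩) (hωmin a ha)⟩, hω'B⟩

theorem minSet_subsingleton (hanti : ∀ a b, r a b → r b a → a = b) (S : Set Ω) :
    (minSet r S).Subsingleton :=
  fun _ hω _ hω' => hanti _ _ (hω.2 _ hω'.1) (hω'.2 _ hω.1)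

end minSet

theorem exists_isLinRel_minSet_nonempty (Ω : Type*) :
    ∃ r : Ω → Ω → Prop, IsLinRel r ∧ ∀ A : Set Ω, A.Nonempty → (minSet r A).Nonempty := by
  let := IsWellOrder.linearOrder (WellOrderingRel (α := Ω))
  have hwf : WellFounded ((· < ·) : Ω → Ω → Prop) := WellOrderingRel.isWellOrder.wf
  exact ⟨(· ≤ ·), ⟨le_total, fun _ _ => le_antisymm, fun _ _ _ => le_trans⟩,
    fun A hA => ⟨hwf.min A hA, hwf.min_mem A hA, fun _ hω => hwf.min_le hω⟩⟩

theorem IsRevision.md_eq_of_subsingleton {Ω E : Type*} {md : E → Set Ω} {s : E → Set Ω → E}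
    (hs : IsRevision md s) (Ψ : E) {S : Set Ω} (hS : S.Subsingleton) : md (s Ψ S) = S := by
  obtain rfl | ⟨ω, rfl⟩ := hS.eq_empty_or_singleton
  · exact subset_empty_iff.mp (hs Ψ ∅ ∅).1
  · exact (subset_singleton_iff_eq.mp (hs Ψ {ω} ∅).1).resolve_left
      ((hs Ψ {ω} ∅).2.2.1 (singleton_ne_empty ω))

theorem isRevision_of_md_eq {Ω E : Type*} {md : E → Set Ω} {t : E → Set Ω → E} {r : Ω → Ω → Prop}
    (hr : IsLinRel r) (hmin : ∀ A : Set Ω, A.Nonempty → (minSet r A).Nonempty)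
    (ht : ∀ Ψ A, md (t Ψ A) = if md Ψ ∩ A = ∅ then minSet r A else md Ψ ∩ A) :
    IsRevision md t := by
  intro Ψ A B
  have hAB : md Ψ ∩ (A ∩ B) = md Ψ ∩ A ∩ B := (inter_assoc _ _ _).symm
  by_cases hA : md Ψ ∩ A = ∅
  · have hAB_empty : md Ψ ∩ (A ∩ B) = ∅ := by rw [hAB, hA, empty_inter]
    rw [ht Ψ A, if_pos hA, ht Ψ (A ∩ B), if_pos hAB_empty]
    refine ⟨minSet_subset A, fun h => absurd hA h, fun hA' => ?_, minSet_inter_subset A B,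
      fun h => minSet_inter_subset_of_nonempty hr.2.2 (nonempty_iff_ne_empty.mpr h)⟩
    exact (hmin A (nonempty_iff_ne_empty.mpr hA')).ne_empty
  · rw [ht Ψ A, if_neg hA, ht Ψ (A ∩ B)]
    refine ⟨inter_subset_right, fun _ => rfl, fun _ => hA, ?_, fun h => ?_⟩
    · split_ifs with h
      · rw [← hAB, h]
        exact empty_subset _
      · rw [hAB]
    · rw [if_neg (hAB ▸ h), hAB]

theorem revision_realizable_iff_linearRevision_general {Ω E : Type*}
    (md : E → Set Ω) :
    (∃ s : E → Set Ω → E, IsRevision md s) ↔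
      (∃ s : E → Set Ω → E, IsLinearRevision md s) := by
  refine ⟨fun ⟨s, hs⟩ => ?_, fun ⟨s, hs⟩ => ⟨s, hs.1⟩⟩
  obtain ⟨r, hr, hmin⟩ := exists_isLinRel_minSet_nonempty Ω
  let t : E → Set Ω → E := fun Ψ A => if md Ψ ∩ A = ∅ then s Ψ (minSet r A) else s Ψ A
  have ht : ∀ Ψ A, md (t Ψ A) = if md Ψ ∩ A = ∅ then minSet r A else md Ψ ∩ A := by
    intro Ψ A
    by_cases hA : md Ψ ∩ A = ∅
    · simp only [t, if_pos hA]
      exact hs.md_eq_of_subsingleton Ψ (minSet_subsingleton hr.2.1 A)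
    · simp only [t, if_neg hA]
      exact (hs Ψ A ∅).2.1 hA
  exact ⟨t, isRevision_of_md_eq hr hmin ht, r, hr,
    fun Ψ A => ⟨fun hA => (ht Ψ A).trans (if_neg hA), fun hA => (ht Ψ A).trans (if_pos hA)⟩⟩

/-- AGM revision is realizable in `⟨E, md⟩` iff there exists a
linear revision operator for `⟨E, md⟩`. -/
theorem revision_realizable_iff_linearRevision {Ω E : Type*} [Fintype Ω] [Nonempty Ω] [Nonempty E]
    (md : E → Set Ω) :
    (∃ s : E → Set Ω → E, IsRevision md s) ↔
      (∃ s : E → Set Ω → E, IsLinearRevision md s) :=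
  revision_realizable_iff_linearRevision_general md
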